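/- Let L ≥ 2 be an integer, σ_b ≥ 0, and x, x' ∈ ℝ^d nonzero. Then K^(L+1)(x,x') > 0 and 1 + Σ_{ℓ=1}^{L} ρ(r̂_−^(ℓ))·((ℓ−1)/(L+1))·Π_{ℓ'=ℓ+1}^{L+1} ρ'(r̂_−^(ℓ')) ≤ Θ(x,x')/K^(L+1)(x,x') ≤ 1 + L/ρ(r̂_−^(L+1)), where r̂_−^(1) = −1 and r̂_−^(ℓ) = ρ(r̂_−^(ℓ−1))·(ℓ−2)/(ℓ−1) for ℓ ≥ 2. -/

import Mathlib

open Real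

/-- The dual activation function of the scaled ReLU `φ(t) = √2·max(t,0)`. -/
noncomputable def rho (r : ℝ) : ℝ :=
  (1 / π) * (Real.sqrt (1 - r ^ 2) + (π - Real.arccos r) * r)

/-- The dual activation function of the derivative of the scaled ReLU. -/
noncomputable def rhoPrime (r : ℝ) : ℝ := (π - Real.arccos r) / π

/-- The depth-`ℓ` NNGP kernel `K^(ℓ)` of a ReLU network with bias variance `σb²`,
defined recursively by `K^(0)(v,w) = ⟪v,w⟫` and
`K^(ℓ)(v,w) = √(K^(ℓ−1)(v,v)·K^(ℓ−1)(w,w))·ρ(K^(ℓ−1)(v,w)/√(K^(ℓ−1)(v,v)·K^(ℓ−1)(w,w))) + σb²`. -/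
noncomputable def Kker (σb : ℝ) {d : ℕ} :
    ℕ → EuclideanSpace ℝ (Fin d) → EuclideanSpace ℝ (Fin d) → ℝ
  | 0, v, w => (inner ℝ v w : ℝ)
  | ℓ + 1, v, w =>
      Real.sqrt (Kker σb ℓ v v * Kker σb ℓ w w) *
        rho (Kker σb ℓ v w / Real.sqrt (Kker σb ℓ v v * Kker σb ℓ w w)) + σb ^ 2

/-- `u^(ℓ) = (‖x‖² + ℓσ_b²)·(‖x'‖² + ℓσ_b²)`, stated for the norms `a = ‖x‖`, `b = ‖x'‖`. -/
noncomputable def uFun (σb a b : ℝ) (ℓ : ℕ) : ℝ :=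
  (a ^ 2 + ℓ * σb ^ 2) * (b ^ 2 + ℓ * σb ^ 2)

/-- `r̂_−^(1) = −1` and `r̂_−^(ℓ) = ρ(r̂_−^(ℓ−1))·(ℓ−2)/(ℓ−1)` for `ℓ ≥ 2`
(the value at `0` is junk). -/
noncomputable def rHatM : ℕ → ℝ
  | 0 => 0
  | 1 => -1
  | (n + 2) => rho (rHatM (n + 1)) * (n : ℝ) / ((n : ℝ) + 1)

/-- `K̇^(ℓ)(v,w) = ρ'( K^(ℓ−1)(v,w) / √(K^(ℓ−1)(v,v)·K^(ℓ−1)(w,w)) )` for `ℓ ≥ 1`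
(the value at `ℓ = 0` is junk). -/
noncomputable def Kdot (σb : ℝ) {d : ℕ} :
    ℕ → EuclideanSpace ℝ (Fin d) → EuclideanSpace ℝ (Fin d) → ℝ
  | 0, _, _ => 1
  | ℓ + 1, v, w =>
      rhoPrime (Kker σb ℓ v w / Real.sqrt (Kker σb ℓ v v * Kker σb ℓ w w))

/-- The neural tangent kernel of an `L`-hidden-layer ReLU network:
`Θ(x,x') = Σ_{ℓ=1}^{L+1} K^(ℓ)(x,x') · Π_{ℓ'=ℓ+1}^{L+1} K̇^(ℓ')(x,x')`. -/
noncomputable def ntk (σb : ℝ) {d : ℕ} (L : ℕ)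
    (v w : EuclideanSpace ℝ (Fin d)) : ℝ :=
  ∑ ℓ ∈ Finset.Icc 1 (L + 1),
    Kker σb ℓ v w * ∏ ℓ' ∈ Finset.Icc (ℓ + 1) (L + 1), Kdot σb ℓ' v w

/-!
Write `u^(ℓ) = K^(ℓ)(x,x)·K^(ℓ)(x',x')` and `r^(ℓ) = K^(ℓ)(x,x')/√u^(ℓ)`, so that
`K^(ℓ+1) = √u^(ℓ)·ρ(r^(ℓ)) + σ_b²` and `K̇^(ℓ+1) = ρ'(r^(ℓ))`. Since `√u^(ℓ) + σ_b² ≤ √u^(ℓ+1)`,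
`|r^(ℓ)| ≤ 1` throughout, and `ρ(r) ≥ r` makes `K^(ℓ)` nondecreasing in `ℓ`; with `0 ≤ ρ' ≤ 1`
every summand of `Θ` is at most `K^(L+1)`, which gives the upper bound.

For the lower bound, `ρ` is increasing and `ℓ·√u^(ℓ+1) ≤ (ℓ+1)·√u^(ℓ)`, so by induction
`r^(ℓ) ≥ r̂_−^(ℓ+1)`: the recursion defining `r̂_−` is the worst case. Hence
`K^(ℓ) ≥ ρ(r̂_−^(ℓ))·√u^(ℓ−1) ≥ ρ(r̂_−^(ℓ))·((ℓ−1)/(L+1))·K^(L+1)` and `K̇^(ℓ') ≥ ρ'(r̂_−^(ℓ'))`.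
-/

open Finset

lemma rhoPrime_nonneg (r : ℝ) : 0 ≤ rhoPrime r :=
  div_nonneg (by linarith [arccos_le_pi r]) pi_pos.le

lemma rhoPrime_le_one (r : ℝ) : rhoPrime r ≤ 1 :=
  (div_le_one pi_pos).2 (by linarith [arccos_nonneg r])

lemma monotone_rhoPrime : Monotone rhoPrime := fun _ _ h =>
  div_le_div_of_nonneg_right (by linarith [arccos_le_arccos h]) pi_pos.le

lemma continuous_rho : Continuous rho := by
  unfold rho
  fun_prop

lemma hasDerivAt_rho {r : ℝ} (hr : r ∈ Set.Ioo (-1 : ℝ) 1) : HasDerivAt rho (rhoPrime r) r := by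
  have hs : 0 < 1 - r ^ 2 := by nlinarith [hr.1, hr.2]
  have hsqrt : HasDerivAt (fun t => √(1 - t ^ 2)) (-(2 * r) / (2 * √(1 - r ^ 2))) r := by
    simpa using ((hasDerivAt_pow 2 r).const_sub 1).sqrt hs.ne'
  have harccos := (hasDerivAt_arccos hr.1.ne' hr.2.ne).const_sub π
  have hsum := (hsqrt.add (harccos.mul (hasDerivAt_id r))).const_mul (1 / π)
  have hderiv : 1 / π * (-(2 * r) / (2 * √(1 - r ^ 2)) +
      (- -(1 / √(1 - r ^ 2)) * id r + (π - arccos r) * 1)) = rhoPrime r := by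
    have := (sqrt_pos.2 hs).ne'
    rw [rhoPrime, id]
    field_simp
    ring
  exact hderiv ▸ hsum

lemma hasDerivWithinAt_rho_interior_Icc {r : ℝ} (hr : r ∈ interior (Set.Icc (-1 : ℝ) 1)) :
    HasDerivWithinAt rho (rhoPrime r) (interior (Set.Icc (-1 : ℝ) 1)) r := by
  rw [interior_Icc] at hr ⊢
  exact (hasDerivAt_rho hr).hasDerivWithinAt

lemma monotoneOn_rho : MonotoneOn rho (Set.Icc (-1 : ℝ) 1) :=
  monotoneOn_of_hasDerivWithinAt_nonneg (convex_Icc _ _) continuous_rho.continuousOn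
    (fun _ => hasDerivWithinAt_rho_interior_Icc) (fun r _ => rhoPrime_nonneg r)

lemma rho_neg_one : rho (-1) = 0 := by
  simp [rho]

lemma rho_zero : rho 0 = 1 / π := by
  simp [rho]

lemma rho_one : rho 1 = 1 := by
  simp [rho, pi_ne_zero]

lemma rho_nonneg {r : ℝ} (hr : r ∈ Set.Icc (-1 : ℝ) 1) : 0 ≤ rho r :=
  rho_neg_one ▸ monotoneOn_rho (by norm_num) hr hr.1

lemma rho_le_one {r : ℝ} (hr : r ∈ Set.Icc (-1 : ℝ) 1) : rho r ≤ 1 :=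
  rho_one ▸ monotoneOn_rho hr (by norm_num) hr.2

lemma rho_pos {r : ℝ} (hr : r ∈ Set.Icc (0 : ℝ) 1) : 0 < rho r :=
  (one_div_pos.2 pi_pos).trans_le
    (rho_zero ▸ monotoneOn_rho (by norm_num) ⟨by linarith [hr.1], hr.2⟩ hr.1)

lemma le_rho {r : ℝ} (hr : r ∈ Set.Icc (-1 : ℝ) 1) : r ≤ rho r := by
  have hanti : AntitoneOn (fun t => rho t - t) (Set.Icc (-1 : ℝ) 1) :=
    antitoneOn_of_hasDerivWithinAt_nonpos (convex_Icc _ _)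
      (continuous_rho.sub continuous_id).continuousOn
      (fun _ hr => (hasDerivWithinAt_rho_interior_Icc hr).sub (hasDerivWithinAt_id _ _))
      (fun t _ => by linarith [rhoPrime_le_one t])
  have := hanti hr (by norm_num) hr.2
  simp only [rho_one, sub_self] at this
  linarith

lemma rHatM_mem_Icc (n : ℕ) : rHatM (n + 1) ∈ Set.Icc (-1 : ℝ) 1 := by
  induction n with
  | zero => norm_num [rHatM]
  | succ n ih =>
    have hρ0 := rho_nonneg ih
    have hfrac : (n : ℝ) / (n + 1) ≤ 1 := (div_le_one (by positivity)).2 (by linarith)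
    have hnonneg : 0 ≤ rho (rHatM (n + 1)) * (n / (n + 1)) := by positivity
    rw [rHatM, mul_div_assoc]
    exact ⟨by linarith, mul_le_one₀ (rho_le_one ih) (by positivity) hfrac⟩

lemma rHatM_mem_Icc_zero_one {n : ℕ} (hn : 2 ≤ n) : rHatM n ∈ Set.Icc (0 : ℝ) 1 := by
  obtain ⟨m, rfl⟩ := Nat.exists_eq_add_of_le' hn
  exact ⟨by have := rho_nonneg (rHatM_mem_Icc m); rw [rHatM]; positivity,
    (rHatM_mem_Icc (m + 1)).2⟩

lemma sqrt_uFun_pos (σb : ℝ) {a b : ℝ} (ha : a ≠ 0) (hb : b ≠ 0) (ℓ : ℕ) :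
    0 < √(uFun σb a b ℓ) :=
  sqrt_pos.2 (by unfold uFun; positivity)

lemma sqrt_uFun_add_le (σb a b : ℝ) (ℓ : ℕ) :
    √(uFun σb a b ℓ) + σb ^ 2 ≤ √(uFun σb a b (ℓ + 1)) := by
  set p := √(a ^ 2 + ℓ * σb ^ 2)
  set q := √(b ^ 2 + ℓ * σb ^ 2)
  have hp : p ^ 2 = a ^ 2 + ℓ * σb ^ 2 := sq_sqrt (by positivity)
  have hq : q ^ 2 = b ^ 2 + ℓ * σb ^ 2 := sq_sqrt (by positivity)
  have hu : uFun σb a b (ℓ + 1) = (p ^ 2 + σb ^ 2) * (q ^ 2 + σb ^ 2) := by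
    rw [uFun, hp, hq]; push_cast; ring
  rw [uFun, sqrt_mul (by positivity), hu, le_sqrt (by positivity) (by positivity)]
  -- AM-GM: `2pq ≤ p² + q²`
  nlinarith [mul_nonneg (sq_nonneg σb) (sq_nonneg (p - q))]

lemma natCast_mul_sqrt_uFun_le (σb a b : ℝ) {ℓ m : ℕ} (h : ℓ ≤ m) :
    ℓ * √(uFun σb a b m) ≤ m * √(uFun σb a b ℓ) := by
  have hℓm : (ℓ : ℝ) ≤ m := Nat.cast_le.2 h
  have factor (c : ℝ) : ℓ * (c ^ 2 + m * σb ^ 2) ≤ m * (c ^ 2 + ℓ * σb ^ 2) := by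
    nlinarith [mul_le_mul_of_nonneg_right hℓm (sq_nonneg c)]
  have key : ℓ ^ 2 * uFun σb a b m ≤ m ^ 2 * uFun σb a b ℓ := by
    have := mul_le_mul (factor a) (factor b) (by positivity) (by positivity)
    unfold uFun
    linarith
  calc (ℓ : ℝ) * √(uFun σb a b m) = √(ℓ ^ 2 * uFun σb a b m) := by
        rw [sqrt_mul (by positivity), sqrt_sq (by positivity)]
    _ ≤ √(m ^ 2 * uFun σb a b ℓ) := sqrt_le_sqrt key
    _ = m * √(uFun σb a b ℓ) := by
        rw [sqrt_mul (by positivity), sqrt_sq (by positivity)]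

lemma div_mem_Icc_of_abs_le {a b : ℝ} (h : |a| ≤ b) : a / b ∈ Set.Icc (-1 : ℝ) 1 := by
  have hb : 0 ≤ b := (abs_nonneg a).trans h
  rw [Set.mem_Icc, ← abs_le, abs_div, abs_of_nonneg hb]
  exact div_le_one_of_le₀ h hb

lemma mul_div_cancel_of_abs_le {a b : ℝ} (h : |a| ≤ b) : b * (a / b) = a := by
  rcases ((abs_nonneg a).trans h).eq_or_lt with hb | hb
  · rw [← hb] at h ⊢
    simp [abs_nonpos_iff.1 h]
  · exact mul_div_cancel₀ a hb.ne'

section Kernels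

variable {σb : ℝ} {d : ℕ}

lemma Kker_self (v : EuclideanSpace ℝ (Fin d)) (ℓ : ℕ) :
    Kker σb ℓ v v = ‖v‖ ^ 2 + ℓ * σb ^ 2 := by
  induction ℓ with
  | zero => simp [Kker]
  | succ n ih =>
    have hdiag (p : ℝ) : p * rho (p / p) = p := by
      rcases eq_or_ne p 0 with rfl | hp
      · simp
      · rw [div_self hp, rho_one, mul_one]
    rw [Kker, ih, sqrt_mul_self (by positivity), hdiag]
    push_cast
    ring

/-- The correlation `K^(ℓ)(v,w) / √(K^(ℓ)(v,v)·K^(ℓ)(w,w))`; by `Kker_self` the denominator is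
`√(uFun σb ‖v‖ ‖w‖ ℓ)`. -/
noncomputable def Kcorr (σb : ℝ) (ℓ : ℕ) (v w : EuclideanSpace ℝ (Fin d)) : ℝ :=
  Kker σb ℓ v w / √(uFun σb ‖v‖ ‖w‖ ℓ)

variable (x x' : EuclideanSpace ℝ (Fin d))

lemma Kker_succ (ℓ : ℕ) :
    Kker σb (ℓ + 1) x x' = √(uFun σb ‖x‖ ‖x'‖ ℓ) * rho (Kcorr σb ℓ x x') + σb ^ 2 := by
  rw [Kker, Kker_self, Kker_self]
  rfl

lemma Kdot_succ (ℓ : ℕ) : Kdot σb (ℓ + 1) x x' = rhoPrime (Kcorr σb ℓ x x') := by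
  rw [Kdot, Kker_self, Kker_self]
  rfl

lemma abs_Kker_le (ℓ : ℕ) : |Kker σb ℓ x x'| ≤ √(uFun σb ‖x‖ ‖x'‖ ℓ) := by
  induction ℓ with
  | zero =>
    have hu : uFun σb ‖x‖ ‖x'‖ 0 = (‖x‖ * ‖x'‖) ^ 2 := by simp [uFun]; ring
    rw [hu, sqrt_sq (by positivity)]
    exact abs_real_inner_le_norm x x'
  | succ n ih =>
    have hc := div_mem_Icc_of_abs_le ih
    have hK0 : 0 ≤ Kker σb (n + 1) x x' := by
      rw [Kker_succ]
      have := rho_nonneg hc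
      positivity
    rw [abs_of_nonneg hK0, Kker_succ]
    calc √(uFun σb ‖x‖ ‖x'‖ n) * rho (Kcorr σb n x x') + σb ^ 2
        ≤ √(uFun σb ‖x‖ ‖x'‖ n) + σb ^ 2 := by
          gcongr
          exact mul_le_of_le_one_right (sqrt_nonneg _) (rho_le_one hc)
      _ ≤ √(uFun σb ‖x‖ ‖x'‖ (n + 1)) := sqrt_uFun_add_le σb _ _ n

lemma Kcorr_mem_Icc (ℓ : ℕ) : Kcorr σb ℓ x x' ∈ Set.Icc (-1 : ℝ) 1 :=
  div_mem_Icc_of_abs_le (abs_Kker_le x x' ℓ)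

lemma Kker_succ_nonneg (ℓ : ℕ) : 0 ≤ Kker σb (ℓ + 1) x x' := by
  rw [Kker_succ]
  have := rho_nonneg (Kcorr_mem_Icc (σb := σb) x x' ℓ)
  positivity

lemma monotone_Kker : Monotone fun ℓ => Kker σb ℓ x x' := by
  refine monotone_nat_of_le_succ fun ℓ => ?_
  have hc := Kcorr_mem_Icc (σb := σb) x x' ℓ
  calc Kker σb ℓ x x' = √(uFun σb ‖x‖ ‖x'‖ ℓ) * Kcorr σb ℓ x x' :=
        (mul_div_cancel_of_abs_le (abs_Kker_le x x' ℓ)).symm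
    _ ≤ √(uFun σb ‖x‖ ‖x'‖ ℓ) * rho (Kcorr σb ℓ x x') + σb ^ 2 := by
        nlinarith [mul_le_mul_of_nonneg_left (le_rho hc) (sqrt_nonneg (uFun σb ‖x‖ ‖x'‖ ℓ))]
    _ = Kker σb (ℓ + 1) x x' := (Kker_succ x x' ℓ).symm

lemma Kdot_nonneg (ℓ : ℕ) : 0 ≤ Kdot σb ℓ x x' := by
  cases ℓ with
  | zero => simp [Kdot]
  | succ n => exact rhoPrime_nonneg _

lemma Kdot_le_one (ℓ : ℕ) : Kdot σb ℓ x x' ≤ 1 := by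
  cases ℓ with
  | zero => simp [Kdot]
  | succ n => exact rhoPrime_le_one _

lemma rho_rHatM_mul_le_Kker_succ_of_le {ℓ : ℕ} (h : rHatM (ℓ + 1) ≤ Kcorr σb ℓ x x') :
    rho (rHatM (ℓ + 1)) * √(uFun σb ‖x‖ ‖x'‖ ℓ) ≤ Kker σb (ℓ + 1) x x' := by
  have hρ := monotoneOn_rho (rHatM_mem_Icc ℓ) (Kcorr_mem_Icc x x' ℓ) h
  rw [Kker_succ]
  nlinarith [mul_le_mul_of_nonneg_right hρ (sqrt_nonneg (uFun σb ‖x‖ ‖x'‖ ℓ))]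

variable {x x'}

lemma rHatM_succ_le_Kcorr (hx : x ≠ 0) (hx' : x' ≠ 0) (ℓ : ℕ) :
    rHatM (ℓ + 1) ≤ Kcorr σb ℓ x x' := by
  induction ℓ with
  | zero => exact (Kcorr_mem_Icc x x' 0).1
  | succ n ih =>
    have hS := sqrt_uFun_pos σb (norm_ne_zero_iff.2 hx) (norm_ne_zero_iff.2 hx')
    have hρ0 := rho_nonneg (rHatM_mem_Icc n)
    have hratio := natCast_mul_sqrt_uFun_le σb ‖x‖ ‖x'‖ (Nat.le_succ n)
    rw [Kcorr, le_div_iff₀ (hS _), rHatM, div_mul_eq_mul_div, div_le_iff₀ (by positivity)]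
    push_cast at hratio
    calc rho (rHatM (n + 1)) * n * √(uFun σb ‖x‖ ‖x'‖ (n + 1))
        ≤ rho (rHatM (n + 1)) * √(uFun σb ‖x‖ ‖x'‖ n) * (n + 1) := by nlinarith
      _ ≤ Kker σb (n + 1) x x' * (n + 1) := by
        gcongr
        exact rho_rHatM_mul_le_Kker_succ_of_le x x' ih

lemma rho_rHatM_mul_le_Kker_succ (hx : x ≠ 0) (hx' : x' ≠ 0) (ℓ : ℕ) :
    rho (rHatM (ℓ + 1)) * √(uFun σb ‖x‖ ‖x'‖ ℓ) ≤ Kker σb (ℓ + 1) x x' :=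
  rho_rHatM_mul_le_Kker_succ_of_le x x' (rHatM_succ_le_Kcorr hx hx' ℓ)

lemma rhoPrime_rHatM_le_Kdot (hx : x ≠ 0) (hx' : x' ≠ 0) (ℓ : ℕ) :
    rhoPrime (rHatM (ℓ + 1)) ≤ Kdot σb (ℓ + 1) x x' := by
  rw [Kdot_succ]
  exact monotone_rhoPrime (rHatM_succ_le_Kcorr hx hx' ℓ)

lemma rho_rHatM_mul_Kker_le (hx : x ≠ 0) (hx' : x' ≠ 0) {m n : ℕ} (h : m ≤ n) :
    rho (rHatM (m + 1)) * m * Kker σb n x x' ≤ n * Kker σb (m + 1) x x' := by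
  have hρ0 := rho_nonneg (rHatM_mem_Icc m)
  have hKn := (le_abs_self _).trans (abs_Kker_le (σb := σb) x x' n)
  calc rho (rHatM (m + 1)) * m * Kker σb n x x'
      ≤ rho (rHatM (m + 1)) * (m * √(uFun σb ‖x‖ ‖x'‖ n)) := by
        rw [mul_assoc]; gcongr
    _ ≤ rho (rHatM (m + 1)) * (n * √(uFun σb ‖x‖ ‖x'‖ m)) :=
        mul_le_mul_of_nonneg_left (natCast_mul_sqrt_uFun_le σb _ _ h) hρ0
    _ = n * (rho (rHatM (m + 1)) * √(uFun σb ‖x‖ ‖x'‖ m)) := by ring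
    _ ≤ n * Kker σb (m + 1) x x' := by
        gcongr; exact rho_rHatM_mul_le_Kker_succ hx hx' m

end Kernels

section NTK

variable {σb : ℝ} {d : ℕ} {L : ℕ} {x x' : EuclideanSpace ℝ (Fin d)}

lemma ntk_eq_Kker_add :
    ntk σb L x x' = Kker σb (L + 1) x x' +
      ∑ ℓ ∈ Icc 1 L, Kker σb ℓ x x' * ∏ ℓ' ∈ Icc (ℓ + 1) (L + 1), Kdot σb ℓ' x x' := by
  rw [ntk, sum_Icc_succ_top (by omega), Icc_eq_empty (show ¬L + 1 + 1 ≤ L + 1 by omega),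
    prod_empty, mul_one, add_comm]

lemma ntk_le :
    ntk σb L x x' ≤ (1 + L) * Kker σb (L + 1) x x' := by
  have hterm : ∀ ℓ ∈ Icc 1 L,
      Kker σb ℓ x x' * ∏ ℓ' ∈ Icc (ℓ + 1) (L + 1), Kdot σb ℓ' x x' ≤ Kker σb (L + 1) x x' := by
    intro ℓ hℓ
    obtain ⟨hℓ1, hℓL⟩ := mem_Icc.1 hℓ
    obtain ⟨m, rfl⟩ := Nat.exists_eq_add_of_le' hℓ1
    calc Kker σb (m + 1) x x' * ∏ ℓ' ∈ Icc (m + 1 + 1) (L + 1), Kdot σb ℓ' x x'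
        ≤ Kker σb (m + 1) x x' :=
          mul_le_of_le_one_right (Kker_succ_nonneg x x' m)
            (prod_le_one (fun _ _ => Kdot_nonneg x x' _) (fun _ _ => Kdot_le_one x x' _))
      _ ≤ Kker σb (L + 1) x x' := monotone_Kker x x' (by omega)
  have hsum := sum_le_card_nsmul _ _ _ hterm
  rw [Nat.card_Icc, Nat.add_sub_cancel, nsmul_eq_mul] at hsum
  rw [ntk_eq_Kker_add]
  linarith

lemma le_ntk (hx : x ≠ 0) (hx' : x' ≠ 0) :
    (1 + ∑ ℓ ∈ Icc 1 L, rho (rHatM ℓ) * (((ℓ : ℝ) - 1) / ((L : ℝ) + 1)) *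
        ∏ ℓ' ∈ Icc (ℓ + 1) (L + 1), rhoPrime (rHatM ℓ')) * Kker σb (L + 1) x x' ≤
      ntk σb L x x' := by
  rw [ntk_eq_Kker_add, add_mul, one_mul, sum_mul]
  refine add_le_add le_rfl (sum_le_sum fun ℓ hℓ => ?_)
  obtain ⟨hℓ1, hℓL⟩ := mem_Icc.1 hℓ
  obtain ⟨m, rfl⟩ := Nat.exists_eq_add_of_le' hℓ1
  have hcoeff : rho (rHatM (m + 1)) * (((m + 1 : ℕ) : ℝ) - 1) / ((L : ℝ) + 1) *
      Kker σb (L + 1) x x' ≤ Kker σb (m + 1) x x' := by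
    rw [div_mul_eq_mul_div, div_le_iff₀ (by positivity)]
    push_cast
    simpa [mul_comm] using rho_rHatM_mul_Kker_le (σb := σb) hx hx' (show m ≤ L + 1 by omega)
  have hprod : ∏ ℓ' ∈ Icc (m + 1 + 1) (L + 1), rhoPrime (rHatM ℓ') ≤
      ∏ ℓ' ∈ Icc (m + 1 + 1) (L + 1), Kdot σb ℓ' x x' := by
    refine prod_le_prod (fun _ _ => rhoPrime_nonneg _) fun ℓ' hℓ' => ?_
    obtain ⟨k, rfl⟩ := Nat.exists_eq_add_of_le' (show 1 ≤ ℓ' by grind)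
    exact rhoPrime_rHatM_le_Kdot hx hx' k
  calc _ = rho (rHatM (m + 1)) * (((m + 1 : ℕ) : ℝ) - 1) / ((L : ℝ) + 1) *
          Kker σb (L + 1) x x' * ∏ ℓ' ∈ Icc (m + 1 + 1) (L + 1), rhoPrime (rHatM ℓ') := by ring
    _ ≤ Kker σb (m + 1) x x' * ∏ ℓ' ∈ Icc (m + 1 + 1) (L + 1), Kdot σb ℓ' x x' :=
        mul_le_mul hcoeff hprod (prod_nonneg fun _ _ => rhoPrime_nonneg _)
          (Kker_succ_nonneg x x' m)

end NTK

theorem ntk_div_Kker_bound_general (L : ℕ) (hL : 2 ≤ L) (σb : ℝ) {d : ℕ}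
    (x x' : EuclideanSpace ℝ (Fin d)) (hx : x ≠ 0) (hx' : x' ≠ 0) :
    0 < Kker σb (L + 1) x x' ∧
    1 + ∑ ℓ ∈ Finset.Icc 1 L,
          rho (rHatM ℓ) * (((ℓ : ℝ) - 1) / ((L : ℝ) + 1)) *
            ∏ ℓ' ∈ Finset.Icc (ℓ + 1) (L + 1), rhoPrime (rHatM ℓ') ≤
        ntk σb L x x' / Kker σb (L + 1) x x' ∧
    ntk σb L x x' / Kker σb (L + 1) x x' ≤ 1 + (L : ℝ) / rho (rHatM (L + 1)) := by
  have hrHat := rHatM_mem_Icc_zero_one (show 2 ≤ L + 1 by omega)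
  have hρpos := rho_pos hrHat
  have hK : 0 < Kker σb (L + 1) x x' :=
    (mul_pos hρpos (sqrt_uFun_pos σb (norm_ne_zero_iff.2 hx) (norm_ne_zero_iff.2 hx') L)).trans_le
      (rho_rHatM_mul_le_Kker_succ hx hx' L)
  refine ⟨hK, (le_div_iff₀ hK).2 (le_ntk hx hx'), ?_⟩
  calc ntk σb L x x' / Kker σb (L + 1) x x' ≤ 1 + L := (div_le_iff₀ hK).2 ntk_le
    _ ≤ 1 + L / rho (rHatM (L + 1)) := by
        gcongr
        exact le_div_self L.cast_nonneg hρpos (rho_le_one ⟨by linarith [hrHat.1], hrHat.2⟩)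

/-- Theorem A.14: for `L ≥ 2`, `σ_b ≥ 0` and nonzero `x, x'`,
`K^(L+1)(x,x') > 0` and
`1 + Σ_{ℓ=1}^{L} ρ(r̂_−^(ℓ))·((ℓ−1)/(L+1))·Π_{ℓ'=ℓ+1}^{L+1} ρ'(r̂_−^(ℓ'))
  ≤ Θ(x,x')/K^(L+1)(x,x') ≤ 1 + L/ρ(r̂_−^(L+1))`. -/
theorem ntk_div_Kker_bound (L : ℕ) (hL : 2 ≤ L) (σb : ℝ) (hσb : 0 ≤ σb) {d : ℕ}
    (x x' : EuclideanSpace ℝ (Fin d)) (hx : x ≠ 0) (hx' : x' ≠ 0) :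
    0 < Kker σb (L + 1) x x' ∧
    1 + ∑ ℓ ∈ Finset.Icc 1 L,
          rho (rHatM ℓ) * (((ℓ : ℝ) - 1) / ((L : ℝ) + 1)) *
            ∏ ℓ' ∈ Finset.Icc (ℓ + 1) (L + 1), rhoPrime (rHatM ℓ') ≤
        ntk σb L x x' / Kker σb (L + 1) x x' ∧
    ntk σb L x x' / Kker σb (L + 1) x x' ≤ 1 + (L : ℝ) / rho (rHatM (L + 1)) :=
  ntk_div_Kker_bound_general L hL σb x x' hx hx'
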